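/- arXiv:1907.07841 — 6 statements merged into one kernel-verified Lean document; each statement's English description precedes it below -/
import Mathlib

section
/- Let n be a nonempty finite index type, let A : Matrix n n ℝ, and let Q and R be symmetric positive definite real n×n matrices. Suppose A has a complex eigenvalue of modulus strictly greater than 1 (i.e., the spectral radius ρ(A) > 1). Then the one-stage cost function c(φ) := Tr(Q · F(φ)) is strictly monotonically increasing in φ: for all positive integers φ and z, c(φ) < c(φ + z). -/
open Matrix

/-
An eigenvalue `μ ≠ 0` makes `A` non-nilpotent, since `Aᵏ v = μᵏ v`, so no power `Aⁱ` vanishes.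
The extra terms of `c(φ + z)` are `Tr(Q Aⁱ R (Aⁱ)ᵀ)`, and writing `Q = Cᵀ C`,
`R = Dᵀ D` with `C`, `D` invertible turns each of them into `Tr(X Xᵀ)` for `X = C Aⁱ Dᵀ ≠ 0`,
which is positive.
-/

namespace Matrix

variable {n : Type*} [Fintype n]

section Eigenvector

variable {S : Type*} [CommRing S] [DecidableEq n]

lemma pow_mulVec_eq_pow_smul {M : Matrix n n S} {μ : S} {v : n → S} (h : M *ᵥ v = μ • v)
    (k : ℕ) : (M ^ k) *ᵥ v = μ ^ k • v := by
  induction k with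
  | zero => simp
  | succ k ih => rw [pow_succ, ← mulVec_mulVec, h, mulVec_smul, ih, smul_smul, ← pow_succ']

lemma not_isNilpotent_of_mulVec_eq_smul [IsDomain S] {M : Matrix n n S} {μ : S} {v : n → S}
    (hμ : μ ≠ 0) (hv : v ≠ 0) (h : M *ᵥ v = μ • v) : ¬IsNilpotent M := by
  rintro ⟨k, hk⟩
  have := pow_mulVec_eq_pow_smul h k
  rw [hk, zero_mulVec, eq_comm, smul_eq_zero] at this
  exact this.elim (pow_ne_zero k hμ) hv

end Eigenvector

variable {𝕜 : Type*} [RCLike 𝕜]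

open scoped ComplexOrder

lemma PosDef.exists_isUnit_eq_conjTranspose_mul [DecidableEq n] {Q : Matrix n n 𝕜} (hQ : Q.PosDef) :
    ∃ C : Matrix n n 𝕜, IsUnit C ∧ Q = Cᴴ * C := by
  open scoped MatrixOrder in
  exact CStarAlgebra.isStrictlyPositive_iff_eq_star_mul_self.mp hQ.isStrictlyPositive

lemma trace_mul_conjTranspose_self_pos {m : Type*} [Fintype m] {X : Matrix m n 𝕜} (hX : X ≠ 0) :
    0 < (X * Xᴴ).trace :=
  (posSemidef_self_mul_conjTranspose X).trace_nonneg.lt_of_ne'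
    (trace_mul_conjTranspose_self_eq_zero_iff.not.mpr hX)

lemma trace_mul_mul_mul_conjTranspose_pos {Q R B : Matrix n n 𝕜} (hQ : Q.PosDef)
    (hR : R.PosDef) (hB : B ≠ 0) : 0 < (Q * (B * R * Bᴴ)).trace := by
  classical
  obtain ⟨C, hC, rfl⟩ := hQ.exists_isUnit_eq_conjTranspose_mul
  obtain ⟨D, hD, rfl⟩ := hR.exists_isUnit_eq_conjTranspose_mul
  have hX : C * B * Dᴴ ≠ 0 := by
    rwa [Ne, (isUnit_conjTranspose D).mpr hD |>.mul_left_eq_zero, hC.mul_right_eq_zero]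
  have key : (Cᴴ * C * (B * (Dᴴ * D) * Bᴴ)).trace = (C * B * Dᴴ * (C * B * Dᴴ)ᴴ).trace := by
    rw [← trace_mul_cycle]
    simp only [conjTranspose_mul, conjTranspose_conjTranspose, Matrix.mul_assoc]
  exact key ▸ trace_mul_conjTranspose_self_pos hX

end Matrix

theorem one_stage_cost_strict_mono_general
    {n : Type*} [Fintype n] [DecidableEq n]
    (A Q R : Matrix n n ℝ) (hQ : Q.PosDef) (hR : R.PosDef)
    (hA : ∃ μ : ℂ, 1 < ‖μ‖ ∧
      ∃ v : n → ℂ, v ≠ 0 ∧ (A.map Complex.ofReal).mulVec v = μ • v)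
    (φ z : ℕ) (hz : 1 ≤ z) :
    (Q * ∑ i ∈ Finset.range φ, A ^ i * R * (Aᵀ) ^ i).trace <
      (Q * ∑ i ∈ Finset.range (φ + z), A ^ i * R * (Aᵀ) ^ i).trace := by
  obtain ⟨μ, hμ, v, hv, hAv⟩ := hA
  have hμ0 : μ ≠ 0 := norm_pos_iff.mp (one_pos.trans hμ)
  have hA_nil : ¬IsNilpotent A := fun h =>
    not_isNilpotent_of_mulVec_eq_smul hμ0 hv hAv (h.map Complex.ofRealHom.mapMatrix)
  rw [← Finset.sum_range_add_sum_Ico _ (Nat.le_add_right φ z), Matrix.mul_add, trace_add,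
    lt_add_iff_pos_right, Finset.mul_sum, trace_sum]
  refine Finset.sum_pos (fun i _ => ?_) (Finset.nonempty_Ico.mpr (by omega))
  have hAi : A ^ i ≠ 0 := fun h => hA_nil ⟨i, h⟩
  simpa [transpose_pow, conjTranspose_eq_transpose_of_trivial] using
    trace_mul_mul_mul_conjTranspose_pos hQ hR hAi

/-- If `A` has a complex eigenvalue of modulus greater than one, then the
one-stage cost `c(φ) = Tr(Q · F(φ))`, with `F(φ) = ∑_{i=1}^{φ} A^{i-1} R (Aᵀ)^{i-1}`,
is strictly increasing in `φ`. -/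
theorem one_stage_cost_strict_mono
    {n : Type*} [Fintype n] [Nonempty n] [DecidableEq n]
    (A Q R : Matrix n n ℝ) (hQ : Q.PosDef) (hR : R.PosDef)
    (hA : ∃ μ : ℂ, 1 < ‖μ‖ ∧
      ∃ v : n → ℂ, v ≠ 0 ∧ (A.map Complex.ofReal).mulVec v = μ • v)
    (φ z : ℕ) (hφ : 1 ≤ φ) (hz : 1 ≤ z) :
    (Q * ∑ i ∈ Finset.range φ, A ^ i * R * (Aᵀ) ^ i).trace <
      (Q * ∑ i ∈ Finset.range (φ + z), A ^ i * R * (Aᵀ) ^ i).trace :=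
  one_stage_cost_strict_mono_general A Q R hQ hR hA φ z hz
end

section
/- Let n, m be finite index types, A : Matrix n n ℝ, B : Matrix n m ℝ, K : Matrix m n ℝ, and let x, e, w : ℕ → (n → ℝ) be sequences of vectors. Let η and k be natural numbers with 1 ≤ η ≤ k, and suppose that for every j with k − η ≤ j ≤ k − 1 the recursion x_{j+1} = A x_j + B K (A + B K)^{j−(k−η)} (x_{k−η} − e_{k−η}) + w_j holds (matrix–vector multiplication). Then x_k = (A + B K)^η x_{k−η} + (A^η − (A + B K)^η) e_{k−η} + ∑_{i=1}^{η} A^{i−1} w_{k−i}. -/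
/-!
Write `P = A + B K` and `t = k - η`. Over the cycle the plant is the linear recursion
`x (j + 1) = A x j + u j` driven by `u j = B K P^(j - t) (x t - e t) + w j`, so by discrete
variation of constants `x k = A^η x t + ∑ i < η, A^i u (k - 1 - i)`. The feedback part of that sum
is `(P^η - A^η) (x t - e t)` by the noncommutative telescoping identity
`∑ i < d, a^i (b - a) b^(d-1-i) = b^d - a^d` with `b - a = B K`; regrouping gives the claim.
-/

open Matrix Finset

theorem sum_pow_mul_sub_mul_pow {R : Type*} [Ring R] (a b : R) (d : ℕ) :
    ∑ i ∈ range d, a ^ i * (b - a) * b ^ (d - 1 - i) = b ^ d - a ^ d := by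
  induction d with
  | zero => simp
  | succ d ih =>
    rw [sum_range_succ', Nat.add_sub_cancel, Nat.sub_zero]
    have hshift : ∑ i ∈ range d, a ^ (i + 1) * (b - a) * b ^ (d - (i + 1))
        = a * ∑ i ∈ range d, a ^ i * (b - a) * b ^ (d - 1 - i) := by
      rw [mul_sum]
      refine sum_congr rfl fun i _ => ?_
      rw [pow_succ', show d - (i + 1) = d - 1 - i by omega, mul_assoc, mul_assoc, mul_assoc]
    rw [hshift, ih, pow_succ' a, pow_succ' b]
    noncomm_ring

namespace Matrix

variable {n α : Type*} [Fintype n] [DecidableEq n] [CommRing α]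

theorem eq_pow_mulVec_add_sum_pow_mulVec (A : Matrix n n α) (y u : ℕ → n → α) (d : ℕ)
    (hy : ∀ j < d, y (j + 1) = A *ᵥ y j + u j) :
    y d = (A ^ d) *ᵥ y 0 + ∑ i ∈ range d, (A ^ i) *ᵥ u (d - 1 - i) := by
  induction d with
  | zero => simp
  | succ d ih =>
    rw [hy d d.lt_succ_self, ih fun j hj => hy j (hj.trans d.lt_succ_self),
      sum_range_succ', Nat.add_sub_cancel, Nat.sub_zero, pow_zero, one_mulVec, mulVec_add,
      mulVec_sum, mulVec_mulVec, ← pow_succ', add_assoc]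
    congr 2
    exact sum_congr rfl fun i _ => by
      rw [mulVec_mulVec, ← pow_succ', show d - (i + 1) = d - 1 - i by omega]

end Matrix

theorem control_cycle_state_representation_general
    {n m : Type*} [Fintype n] [Fintype m] [DecidableEq n]
    (A : Matrix n n ℝ) (B : Matrix n m ℝ) (K : Matrix m n ℝ)
    (x e w : ℕ → n → ℝ) (η k : ℕ) (hηk : η ≤ k)
    (hrec : ∀ j, k - η ≤ j → j ≤ k - 1 →
      x (j + 1) = A.mulVec (x j)
        + (B * K * (A + B * K) ^ (j - (k - η))).mulVec (x (k - η) - e (k - η))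
        + w j) :
    x k = ((A + B * K) ^ η).mulVec (x (k - η))
        + (A ^ η - (A + B * K) ^ η).mulVec (e (k - η))
        + ∑ i ∈ Finset.range η, (A ^ i).mulVec (w (k - 1 - i)) := by
  set P := A + B * K
  set t := k - η
  have hstep : ∀ j < η, x (t + j + 1)
      = A *ᵥ x (t + j) + ((B * K * P ^ j) *ᵥ (x t - e t) + w (t + j)) := fun j hj => by
    rw [hrec (t + j) (by omega) (by omega), Nat.add_sub_cancel_left, add_assoc]
  have hx := eq_pow_mulVec_add_sum_pow_mulVec A (fun j => x (t + j)) _ η hstep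
  have hfeedback : ∑ i ∈ range η, (A ^ i) *ᵥ ((B * K * P ^ (η - 1 - i)) *ᵥ (x t - e t))
      = (P ^ η - A ^ η) *ᵥ (x t - e t) := by
    simp only [mulVec_mulVec, ← sum_mulVec, ← mul_assoc]
    rw [← sum_pow_mul_sub_mul_pow A P, add_sub_cancel_left]
  have hnoise : ∀ i ∈ range η, w (t + (η - 1 - i)) = w (k - 1 - i) := fun i hi => by
    rw [mem_range] at hi
    congr 1
    omega
  have htk : t + η = k := Nat.sub_add_cancel hηk
  simp only [Nat.add_zero, htk, mulVec_add, sum_add_distrib, hfeedback] at hx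
  rw [hx, sum_congr rfl fun i hi => by rw [hnoise i hi], sub_mulVec, sub_mulVec, mulVec_sub,
    mulVec_sub]
  abel

/-- Unrolling the plant recursion over one control cycle: if for all
`k - η ≤ j ≤ k - 1` we have
`x_{j+1} = A x_j + B K (A+BK)^{j-(k-η)} (x_{k-η} - e_{k-η}) + w_j`, then
`x_k = (A+BK)^η x_{k-η} + (A^η - (A+BK)^η) e_{k-η} + ∑_{i=1}^{η} A^{i-1} w_{k-i}`. -/
theorem control_cycle_state_representation
    {n m : Type*} [Fintype n] [Fintype m] [DecidableEq n]
    (A : Matrix n n ℝ) (B : Matrix n m ℝ) (K : Matrix m n ℝ)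
    (x e w : ℕ → n → ℝ) (η k : ℕ) (hη : 1 ≤ η) (hηk : η ≤ k)
    (hrec : ∀ j, k - η ≤ j → j ≤ k - 1 →
      x (j + 1) = A.mulVec (x j)
        + (B * K * (A + B * K) ^ (j - (k - η))).mulVec (x (k - η) - e (k - η))
        + w j) :
    x k = ((A + B * K) ^ η).mulVec (x (k - η))
        + (A ^ η - (A + B * K) ^ η).mulVec (e (k - η))
        + ∑ i ∈ Finset.range η, (A ^ i).mulVec (w (k - 1 - i)) :=
  control_cycle_state_representation_general A B K x e w η k hηk hrec
end

section
/- Let n, m be finite index types, A : Matrix n n ℝ, B : Matrix n m ℝ, K : Matrix m n ℝ with (A + B K)^v = 0 for some positive integer v. Let x, e, w : ℤ → (n → ℝ), let η : ℕ → ℕ satisfy η(l) ≥ 1 for all l, let k : ℤ, and define t(l) := k − ∑_{j<l} η(j) (so t(0) = k). Suppose that for every l with 0 ≤ l ≤ v − 1 the one-cycle representation x_{t(l)} = (A + B K)^{η(l)} x_{t(l+1)} + (A^{η(l)} − (A + B K)^{η(l)}) e_{t(l+1)} + ∑_{i=1}^{η(l)} A^{i−1} w_{t(l)−i} holds. Then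 x_k = ∑_{l=0}^{v−1} (A + B K)^{∑_{j<l} η(j)} ( ∑_{i=1}^{η(l)} A^{i−1} w_{t(l)−i} + (A^{η(l)} − (A + B K)^{η(l)}) e_{t(l+1)} ), i.e., the current plant state depends only on the disturbance terms and the estimation errors at the last v successful controller transmissions, and not on any earlier plant state. -/
/-!
Iterating the one-cycle representation `v` times expresses `x k` as the accumulated
disturbance and estimation-error terms plus `(A + B K) ^ (η 0 + ⋯ + η (v - 1))` applied to the
state at the `v`-th latest transmission. Since every gap `η l` is at least `1`, that exponent is
at least `v`, so the nilpotency `(A + B K) ^ v = 0` kills the dependence on the earlier state.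
-/

open Matrix Finset

theorem Matrix.eq_pow_sum_mulVec_add_sum_of_forall_eq
    {n R : Type*} [Fintype n] [DecidableEq n] [Semiring R]
    (M : Matrix n n R) (η : ℕ → ℕ) (y u : ℕ → n → R) (N : ℕ)
    (h : ∀ l < N, y l = (M ^ η l) *ᵥ y (l + 1) + u l) :
    y 0 = (M ^ ∑ j ∈ range N, η j) *ᵥ y N
      + ∑ l ∈ range N, (M ^ ∑ j ∈ range l, η j) *ᵥ u l := by
  induction N with
  | zero => simp
  | succ N ih =>
    rw [ih fun l hl => h l (hl.trans N.lt_succ_self), h N N.lt_succ_self]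
    simp only [sum_range_succ, mulVec_add, mulVec_mulVec, ← pow_add]
    abel

theorem le_sum_range_of_forall_one_le {η : ℕ → ℕ} (hη : ∀ l, 1 ≤ η l) (v : ℕ) :
    v ≤ ∑ j ∈ range v, η j := by
  simpa using card_nsmul_le_sum (range v) η 1 fun j _ => hη j

theorem v_step_state_representation_general
    {n m : Type*} [Fintype n] [Fintype m] [DecidableEq n]
    (A : Matrix n n ℝ) (B : Matrix n m ℝ) (K : Matrix m n ℝ)
    (v : ℕ) (hABK : (A + B * K) ^ v = 0)
    (x e w : ℤ → n → ℝ) (η : ℕ → ℕ) (hη : ∀ l, 1 ≤ η l)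
    (k : ℤ) (t : ℕ → ℤ) (ht : ∀ l, t l = k - ∑ j ∈ Finset.range l, (η j : ℤ))
    (hrec : ∀ l, l < v →
      x (t l) = ((A + B * K) ^ η l).mulVec (x (t (l + 1)))
        + (A ^ η l - (A + B * K) ^ η l).mulVec (e (t (l + 1)))
        + ∑ i ∈ Finset.range (η l), (A ^ i).mulVec (w (t l - (i + 1)))) :
    x k = ∑ l ∈ Finset.range v,
      ((A + B * K) ^ (∑ j ∈ Finset.range l, η j)).mulVec
        (∑ i ∈ Finset.range (η l), (A ^ i).mulVec (w (t l - (i + 1)))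
          + (A ^ η l - (A + B * K) ^ η l).mulVec (e (t (l + 1)))) := by
  have ht₀ : t 0 = k := by simp [ht]
  have hunroll := (A + B * K).eq_pow_sum_mulVec_add_sum_of_forall_eq η (fun l => x (t l))
    (fun l => ∑ i ∈ range (η l), (A ^ i) *ᵥ w (t l - (i + 1))
      + (A ^ η l - (A + B * K) ^ η l) *ᵥ e (t (l + 1))) v
    fun l hl => by rw [hrec l hl, add_assoc, add_comm (_ *ᵥ e _)]
  rw [← ht₀, hunroll, pow_eq_zero_of_le (le_sum_range_of_forall_one_le hη v) hABK,
    zero_mulVec, zero_add]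

/-- For a `v`-step controllable plant (`(A+BK)^v = 0`), unrolling the
one-cycle state representation over the last `v` successful controller transmissions
shows that the current state depends only on the disturbances and the estimation errors
at those transmissions, and not on any earlier plant state. -/
theorem v_step_state_representation
    {n m : Type*} [Fintype n] [Fintype m] [DecidableEq n]
    (A : Matrix n n ℝ) (B : Matrix n m ℝ) (K : Matrix m n ℝ)
    (v : ℕ) (hv : 1 ≤ v) (hABK : (A + B * K) ^ v = 0)
    (x e w : ℤ → n → ℝ) (η : ℕ → ℕ) (hη : ∀ l, 1 ≤ η l)
    (k : ℤ) (t : ℕ → ℤ) (ht : ∀ l, t l = k - ∑ j ∈ Finset.range l, (η j : ℤ))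
    (hrec : ∀ l, l < v →
      x (t l) = ((A + B * K) ^ η l).mulVec (x (t (l + 1)))
        + (A ^ η l - (A + B * K) ^ η l).mulVec (e (t (l + 1)))
        + ∑ i ∈ Finset.range (η l), (A ^ i).mulVec (w (t l - (i + 1)))) :
    x k = ∑ l ∈ Finset.range v,
      ((A + B * K) ^ (∑ j ∈ Finset.range l, η j)).mulVec
        (∑ i ∈ Finset.range (η l), (A ^ i).mulVec (w (t l - (i + 1)))
          + (A ^ η l - (A + B * K) ^ η l).mulVec (e (t (l + 1)))) :=
  v_step_state_representation_general A B K v hABK x e w η hη k t ht hrec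
end

section
/- Let n be a nonempty finite index type, A : Matrix n n ℝ, and Q, R : Matrix n n ℝ symmetric positive definite. Let ρ(A) denote the spectral radius of A and define c(j) := Tr(Q · ∑_{i=1}^{j} A^{i−1} R (Aᵀ)^{i−1}). Let p_s, p_c ∈ (0,1) satisfy p_s · ρ(A)² < 1 and p_c · ρ(A)² < 1. Then the expected per-cycle cost of the persistent uplink–downlink scheduling policy is finite: the family (n′, m, n) ↦ (1−p_c)² (1−p_s) · p_c^{n′−1} p_s^{m−1} p_c^{n−1} · ∑_{i=1}^{m+n} c(n′ + i), indexed by triples of positive integers (n′, m, n), is summable. -/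
/-!
Gelfand's formula bounds `‖A ^ l‖` by `C t ^ l` for any `t > ρ(A)`, so with `r = t²` each summand
`Tr(Q A^l R (Aᵀ)^l)` of the one-stage cost is `O(r ^ l)` and `c(j) = O(r ^ j)`. Choosing
`max 1 ρ(A)² < r < min (1/p_s) (1/p_c)`, the cycle term is dominated by a constant times
`(p_c r)^(n'-1) (p_s r)^(m-1) (p_c r)^(n-1)`, a product of three convergent geometric series.
-/

open Matrix

/-- The spectral radius of a real square matrix: the supremum of the moduli of its
complex eigenvalues. -/
noncomputable def specRad {n : Type*} [Fintype n] [DecidableEq n]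
    (A : Matrix n n ℝ) : ℝ :=
  sSup {r : ℝ | ∃ μ : ℂ, r = ‖μ‖ ∧
    ∃ v : n → ℂ, v ≠ 0 ∧ (A.map Complex.ofReal).mulVec v = μ • v}

open Filter Finset

theorem Matrix.mem_spectrum_iff_exists_mulVec_eq_smul {n K : Type*} [Fintype n] [DecidableEq n]
    [Field K] (M : Matrix n n K) (μ : K) :
    μ ∈ spectrum K M ↔ ∃ v, v ≠ 0 ∧ M *ᵥ v = μ • v := by
  simp only [← Matrix.spectrum_toLin', ← Module.End.hasEigenvalue_iff_mem_spectrum,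
    Module.End.hasEigenvalue_iff, Submodule.ne_bot_iff, Module.End.mem_eigenspace_iff,
    Matrix.toLin'_apply, and_comm]

section SpectralRadius

variable {n : Type*} [Fintype n] [DecidableEq n]

theorem specRad_eq_sSup_norm_spectrum (A : Matrix n n ℝ) :
    specRad A = sSup ((‖·‖) '' spectrum ℂ (A.map Complex.ofReal)) := by
  refine congrArg sSup (Set.ext fun r => ?_)
  simp only [Set.mem_ofPred_eq, Set.mem_image, Matrix.mem_spectrum_iff_exists_mulVec_eq_smul]
  exact ⟨fun ⟨μ, hr, hv⟩ => ⟨μ, hv, hr.symm⟩, fun ⟨μ, hv, hr⟩ => ⟨μ, hr.symm, hv⟩⟩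

theorem norm_le_specRad {A : Matrix n n ℝ} {μ : ℂ} (hμ : μ ∈ spectrum ℂ (A.map Complex.ofReal)) :
    ‖μ‖ ≤ specRad A := by
  rw [specRad_eq_sSup_norm_spectrum]
  exact le_csSup ((Matrix.finite_spectrum _).image _).bddAbove ⟨μ, hμ, rfl⟩

theorem specRad_nonneg (A : Matrix n n ℝ) : 0 ≤ specRad A :=
  Real.sSup_nonneg fun _ ⟨μ, hr, _⟩ => hr ▸ norm_nonneg μ

theorem spectralRadius_map_ofReal_le_specRad (A : Matrix n n ℝ) :
    spectralRadius ℂ (A.map Complex.ofReal) ≤ ENNReal.ofReal (specRad A) :=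
  iSup₂_le fun μ hμ =>
    (ofReal_norm μ).symm.trans_le (ENNReal.ofReal_le_ofReal (norm_le_specRad hμ))

end SpectralRadius

theorem spectrum.exists_norm_pow_le_of_spectralRadius_lt {A : Type*} [NormedRing A]
    [NormedAlgebra ℂ A] [CompleteSpace A] (a : A) {t : ℝ}
    (ht : spectralRadius ℂ a < ENNReal.ofReal t) : ∃ C, ∀ l : ℕ, ‖a ^ l‖ ≤ C * t ^ l := by
  have ht0 : 0 < t := ENNReal.ofReal_pos.mp (pos_of_gt ht)
  have hgelfand := spectrum.pow_norm_pow_one_div_tendsto_nhds_spectralRadius a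
  have hev : ∀ᶠ l : ℕ in atTop, ‖a ^ l‖ ≤ 1 * ‖t ^ l‖ := by
    filter_upwards [hgelfand.eventually_lt_const ht, eventually_gt_atTop 0] with l hl hl0
    rw [ENNReal.ofReal_lt_ofReal_iff ht0, one_div,
      Real.rpow_inv_lt_iff_of_pos (norm_nonneg _) ht0.le (by positivity)] at hl
    simpa [abs_of_pos ht0] using hl.le
  obtain ⟨C, hC⟩ := (Asymptotics.isBigO_cofinite_iff fun l hl => absurd hl (by positivity)).mp
    (Nat.cofinite_eq_atTop ▸ Asymptotics.IsBigO.of_bound 1 hev)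
  exact ⟨C, fun l => by simpa [abs_of_pos ht0] using hC l⟩

theorem abs_sum_range_le_of_abs_le_geom {f : ℕ → ℝ} {K r : ℝ} (hr : 1 < r)
    (hf : ∀ l, |f l| ≤ K * r ^ l) (a m : ℕ) :
    |∑ i ∈ range m, f (a + i)| ≤ K / (r - 1) * r ^ (a + m) := by
  have hK : 0 ≤ K := by simpa using (abs_nonneg _).trans (hf 0)
  have hr1 : 0 < r - 1 := sub_pos.mpr hr
  calc |∑ i ∈ range m, f (a + i)| ≤ ∑ i ∈ range m, K * r ^ a * r ^ i :=
        (abs_sum_le_sum_abs _ _).trans <| sum_le_sum fun i _ => by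
          rw [mul_assoc, ← pow_add]; exact hf _
    _ = K * r ^ a * ((r ^ m - 1) / (r - 1)) := by rw [← mul_sum, geom_sum_eq hr.ne']
    _ ≤ K * r ^ a * (r ^ m / (r - 1)) := by gcongr; linarith
    _ = K / (r - 1) * r ^ (a + m) := by rw [pow_add]; ring

theorem summable_pnat_geometric {u : ℝ} (hu₀ : 0 ≤ u) (hu₁ : u < 1) :
    Summable fun k : ℕ+ => u ^ ((k : ℕ) - 1) :=
  (summable_geometric_of_lt_one hu₀ hu₁).comp_injective PNat.natPred_injective

theorem LinearMap.exists_norm_apply_le {𝕜 E F : Type*} [NontriviallyNormedField 𝕜]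
    [CompleteSpace 𝕜] [NormedAddCommGroup E] [NormedSpace 𝕜 E] [FiniteDimensional 𝕜 E]
    [NormedAddCommGroup F] [NormedSpace 𝕜 F] (f : E →ₗ[𝕜] F) :
    ∃ C, 0 ≤ C ∧ ∀ x, ‖f x‖ ≤ C * ‖x‖ :=
  ⟨_, norm_nonneg _, (LinearMap.toContinuousLinearMap f).le_opNorm⟩

section Frobenius

-- The Frobenius norm is submultiplicative and invariant under transposition and under the entrywise
-- embedding `ℝ → ℂ`: exactly what is needed to transport Gelfand's formula to `A` and `Aᵀ`.

attribute [local instance] Matrix.frobeniusNormedAddCommGroup Matrix.frobeniusNormedSpace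
  Matrix.frobeniusNormedRing Matrix.frobeniusNormedAlgebra

variable {n : Type*} [Fintype n] [DecidableEq n]

theorem exists_frobenius_norm_pow_le (A : Matrix n n ℝ) {t : ℝ} (ht : specRad A < t) :
    ∃ C, ∀ l : ℕ, ‖A ^ l‖ ≤ C * t ^ l := by
  obtain ⟨C, hC⟩ := spectrum.exists_norm_pow_le_of_spectralRadius_lt (A.map Complex.ofReal)
    ((spectralRadius_map_ofReal_le_specRad A).trans_lt
      ((ENNReal.ofReal_lt_ofReal_iff ((specRad_nonneg A).trans_lt ht)).mpr ht))
  refine ⟨C, fun l => ?_⟩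
  rw [← frobenius_norm_map_eq (A ^ l) Complex.ofReal Complex.norm_real]
  exact (congrArg norm (Matrix.map_pow A Complex.ofRealHom l)).trans_le (hC l)

theorem exists_abs_trace_mul_conj_pow_le (A Q R : Matrix n n ℝ) {r : ℝ}
    (hr : specRad A ^ 2 < r) :
    ∃ K, ∀ l : ℕ, |(Q * (A ^ l * R * Aᵀ ^ l)).trace| ≤ K * r ^ l := by
  obtain ⟨C, hC⟩ := exists_frobenius_norm_pow_le A ((Real.lt_sqrt (specRad_nonneg A)).mpr hr)
  obtain ⟨D, hD₀, hD⟩ := (traceLinearMap n ℝ ℝ ∘ₗ LinearMap.mulLeft ℝ Q).exists_norm_apply_le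
  refine ⟨D * ‖R‖ * C ^ 2, fun l => ?_⟩
  have hA : ‖A ^ l‖ ^ 2 ≤ C ^ 2 * r ^ l := by
    calc ‖A ^ l‖ ^ 2 ≤ (C * √r ^ l) ^ 2 := pow_le_pow_left₀ (norm_nonneg _) (hC l) 2
      _ = C ^ 2 * r ^ l := by
        rw [mul_pow, ← pow_mul, mul_comm l, pow_mul, Real.sq_sqrt ((sq_nonneg _).trans hr.le)]
  calc |(Q * (A ^ l * R * Aᵀ ^ l)).trace| ≤ D * ‖A ^ l * R * Aᵀ ^ l‖ := hD _
    _ ≤ D * (‖A ^ l‖ * ‖R‖ * ‖(A ^ l)ᵀ‖) := by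
        rw [transpose_pow]
        gcongr
        exact (norm_mul_le _ _).trans
          (mul_le_mul_of_nonneg_right (norm_mul_le _ _) (norm_nonneg _))
    _ = D * ‖R‖ * ‖A ^ l‖ ^ 2 := by rw [frobenius_norm_transpose]; ring
    _ ≤ D * ‖R‖ * C ^ 2 * r ^ l := by
        rw [mul_assoc _ (C ^ 2)]; gcongr

theorem exists_abs_trace_mul_sum_conj_pow_le (A Q R : Matrix n n ℝ) {r : ℝ} (hr₁ : 1 < r)
    (hr : specRad A ^ 2 < r) :
    ∃ K, ∀ j : ℕ, |(Q * ∑ l ∈ range j, A ^ l * R * Aᵀ ^ l).trace| ≤ K * r ^ j := by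
  obtain ⟨K, hK⟩ := exists_abs_trace_mul_conj_pow_le A Q R hr
  refine ⟨K / (r - 1), fun j => ?_⟩
  simpa [Matrix.mul_sum, trace_sum] using abs_sum_range_le_of_abs_le_geom hr₁ hK 0 j

end Frobenius

theorem summable_cycle_cost {c : ℕ → ℝ} {K r p q : ℝ} (hr : 1 < r)
    (hc : ∀ j, |c j| ≤ K * r ^ j) (hp₀ : 0 ≤ p) (hpr : p * r < 1) (hq₀ : 0 ≤ q)
    (hqr : q * r < 1) :
    Summable fun x : ℕ+ × ℕ+ × ℕ+ => q ^ ((x.1 : ℕ) - 1) * p ^ ((x.2.1 : ℕ) - 1)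
      * q ^ ((x.2.2 : ℕ) - 1) * ∑ i ∈ range ((x.2.1 : ℕ) + x.2.2), c (x.1 + i + 1) := by
  have hr₀ : 0 ≤ r := by linarith
  have hq := summable_pnat_geometric (by positivity : 0 ≤ q * r) hqr
  have hg := hq.mul_of_nonneg
    ((summable_pnat_geometric (by positivity : 0 ≤ p * r) hpr).mul_of_nonneg hq
      (fun _ => by positivity) (fun _ => by positivity))
    (fun _ => by positivity) (fun _ => by positivity)
  have key (a b d : ℕ) :
      ‖q ^ a * p ^ b * q ^ d * ∑ i ∈ range (b + 1 + (d + 1)), c (a + 1 + i + 1)‖ ≤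
        K / (r - 1) * r ^ 4 * ((q * r) ^ a * ((p * r) ^ b * (q * r) ^ d)) := by
    have hS : |∑ i ∈ range (b + 1 + (d + 1)), c (a + 1 + i + 1)|
        ≤ K / (r - 1) * r ^ (a + 2 + (b + 1 + (d + 1))) := by
      convert abs_sum_range_le_of_abs_le_geom hr hc (a + 2) (b + 1 + (d + 1)) using 4
      omega
    rw [norm_mul, Real.norm_of_nonneg (by positivity), Real.norm_eq_abs]
    calc q ^ a * p ^ b * q ^ d * |∑ i ∈ range (b + 1 + (d + 1)), c (a + 1 + i + 1)|
        ≤ q ^ a * p ^ b * q ^ d * (K / (r - 1) * r ^ (a + 2 + (b + 1 + (d + 1)))) := by gcongr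
      _ = _ := by ring
  refine (hg.mul_left (K / (r - 1) * r ^ 4)).of_norm_bounded fun ⟨a, b, d⟩ => ?_
  have := key a.natPred b.natPred d.natPred
  rw [PNat.natPred_add_one, PNat.natPred_add_one, PNat.natPred_add_one] at this
  exact this

theorem persistent_policy_expected_cycle_cost_summable_general
    {n : Type*} [Fintype n] [DecidableEq n]
    (A Q R : Matrix n n ℝ)
    (ps pc : ℝ) (hps : ps ∈ Set.Ioo (0 : ℝ) 1) (hpc : pc ∈ Set.Ioo (0 : ℝ) 1)
    (hs : ps * specRad A ^ 2 < 1) (hc : pc * specRad A ^ 2 < 1) :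
    Summable (fun x : ℕ+ × ℕ+ × ℕ+ =>
      (1 - pc) ^ 2 * (1 - ps) * pc ^ ((x.1 : ℕ) - 1) * ps ^ ((x.2.1 : ℕ) - 1)
        * pc ^ ((x.2.2 : ℕ) - 1)
        * ∑ i ∈ Finset.range ((x.2.1 : ℕ) + (x.2.2 : ℕ)),
            (Q * ∑ l ∈ Finset.range ((x.1 : ℕ) + i + 1), A ^ l * R * (Aᵀ) ^ l).trace) := by
  obtain ⟨hps₀, hps₁⟩ := hps
  obtain ⟨hpc₀, hpc₁⟩ := hpc
  have hinv {p x : ℝ} (hp : 0 < p) : x < 1 / p ↔ p * x < 1 := lt_div_iff₀' hp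
  obtain ⟨r, hr, hr'⟩ : ∃ r, max 1 (specRad A ^ 2) < r ∧ r < min (1 / ps) (1 / pc) :=
    exists_between <| max_lt
      (lt_min ((hinv hps₀).2 (by linarith)) ((hinv hpc₀).2 (by linarith)))
      (lt_min ((hinv hps₀).2 hs) ((hinv hpc₀).2 hc))
  obtain ⟨K, hK⟩ := exists_abs_trace_mul_sum_conj_pow_le A Q R
    ((le_max_left _ _).trans_lt hr) ((le_max_right _ _).trans_lt hr)
  have hcycle := summable_cycle_cost ((le_max_left _ _).trans_lt hr) hK
    hps₀.le ((hinv hps₀).1 (hr'.trans_le (min_le_left _ _)))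
    hpc₀.le ((hinv hpc₀).1 (hr'.trans_le (min_le_right _ _)))
  exact (hcycle.mul_left ((1 - pc) ^ 2 * (1 - ps))).congr fun x => by ring

/-- For the persistent uplink–downlink scheduling policy, if
`p_s · ρ(A)² < 1` and `p_c · ρ(A)² < 1`, the expected per-cycle cost is finite: the family
`(n', m, n) ↦ (1-p_c)²(1-p_s) p_c^{n'-1} p_s^{m-1} p_c^{n-1} ∑_{i=1}^{m+n} c(n'+i)`,
indexed by triples of positive integers, is summable, where
`c(j) = Tr(Q · ∑_{i=1}^{j} A^{i-1} R (Aᵀ)^{i-1})`. -/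
theorem persistent_policy_expected_cycle_cost_summable
    {n : Type*} [Fintype n] [Nonempty n] [DecidableEq n]
    (A Q R : Matrix n n ℝ) (hQ : Q.PosDef) (hR : R.PosDef)
    (ps pc : ℝ) (hps : ps ∈ Set.Ioo (0 : ℝ) 1) (hpc : pc ∈ Set.Ioo (0 : ℝ) 1)
    (hs : ps * specRad A ^ 2 < 1) (hc : pc * specRad A ^ 2 < 1) :
    Summable (fun x : ℕ+ × ℕ+ × ℕ+ =>
      (1 - pc) ^ 2 * (1 - ps) * pc ^ ((x.1 : ℕ) - 1) * ps ^ ((x.2.1 : ℕ) - 1)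
        * pc ^ ((x.2.2 : ℕ) - 1)
        * ∑ i ∈ Finset.range ((x.2.1 : ℕ) + (x.2.2 : ℕ)),
            (Q * ∑ l ∈ Finset.range ((x.1 : ℕ) + i + 1), A ^ l * R * (Aᵀ) ^ l).trace) :=
  persistent_policy_expected_cycle_cost_summable_general A Q R ps pc hps hpc hs hc
end

section
/- Let p ∈ (0,1) and let c : ℕ → ℝ be nonnegative. If the series ∑_{j=1}^{∞} p^j · (∑_{i=2}^{2j+1} c(i)) converges, then the series ∑_{i=0}^{∞} c(i) (√p)^i converges. -/
/-! For `i = j + 2`, the one-stage cost `c i` is one of the summands of the `(j / 2)`-th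
cycle cost, and `√p ^ i ≤ p ^ (j / 2 + 1)` because `√p ≤ 1`. So each term of `∑ c i √p ^ i`
is dominated by a cycle-cost term, and every cycle-cost term is used at most twice. -/

theorem Summable.comp_div_two {M : Type*} [AddCommMonoid M] [TopologicalSpace M] [ContinuousAdd M]
    {f : ℕ → M} (hf : Summable f) : Summable fun n => f (n / 2) :=
  Summable.even_add_odd (by simpa using hf)
    (hf.congr fun n => by rw [Nat.mul_add_div two_pos]; simp)

theorem pow_le_sq_pow_div_two {x : ℝ} (hx₀ : 0 ≤ x) (hx₁ : x ≤ 1) (n : ℕ) :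
    x ^ n ≤ (x ^ 2) ^ (n / 2) := by
  rw [← pow_mul]
  exact pow_le_pow_of_le_one hx₀ hx₁ (Nat.mul_div_le n 2)

/-- Necessity step for the naive alternating policy: if
`∑_{j ≥ 1} p^j (∑_{i=2}^{2j+1} c(i))` converges, then `∑ c(i) (√p)^i` converges. -/
theorem summable_sqrt_of_summable_cycle_cost
    (p : ℝ) (hp : p ∈ Set.Ioo (0 : ℝ) 1) (c : ℕ → ℝ) (hc : ∀ i, 0 ≤ c i)
    (h : Summable (fun j : ℕ => p ^ (j + 1) * ∑ i ∈ Finset.Icc 2 (2 * (j + 1) + 1), c i)) :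
    Summable (fun i : ℕ => c i * Real.sqrt p ^ i) := by
  rw [← summable_nat_add_iff 2]
  refine h.comp_div_two.of_nonneg_of_le (fun i => mul_nonneg (hc _) (by positivity)) fun i => ?_
  have hcost : c (i + 2) ≤ ∑ k ∈ Finset.Icc 2 (2 * (i / 2 + 1) + 1), c k :=
    Finset.single_le_sum (fun k _ => hc k) (by simp only [Finset.mem_Icc]; omega)
  have hdisc : Real.sqrt p ^ (i + 2) ≤ p ^ (i / 2 + 1) := by
    have := pow_le_sq_pow_div_two (Real.sqrt_nonneg p) (Real.sqrt_le_one.2 hp.2.le) (i + 2)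
    rwa [Real.sq_sqrt hp.1.le, Nat.add_div_right i two_pos] at this
  rw [mul_comm (p ^ _)]
  exact mul_le_mul hcost hdisc (by positivity) (Finset.sum_nonneg fun k _ => hc k)
end

section
/- Let n be a nonempty finite index type, A : Matrix n n ℝ, and Q, R : Matrix n n ℝ symmetric positive definite. Let μ ∈ ℂ be an eigenvalue of A (i.e., of the complexification of A). Then there exists a constant κ > 0 such that for every natural number m, Tr(Q · A^m R (Aᵀ)^m) ≥ κ · |μ|^{2m}. -/
/-!
Positive definiteness gives `cQ • 1 ≤ Q` and `cR • 1 ≤ R` in the Loewner order for some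
`cQ, cR > 0`, and `Tr(P S) ≥ 0` for positive semidefinite `P, S`; hence
`Tr(Q X R Xᵀ) ≥ cQ cR Tr(Xᵀ X) = cQ cR ‖X‖_F²` for `X = A^m`. An eigenvector of `A` for `μ` is an
eigenvector of `A^m` for `μ^m`, which forces `|μ|^m ≤ ‖A^m‖_F`.
-/

open Matrix

attribute [local instance] Matrix.frobeniusNormedAddCommGroup Matrix.frobeniusNormSMulClass

namespace Matrix

variable {n : Type*} [Fintype n]

section Order

open scoped ComplexOrder MatrixOrder

variable {𝕜 : Type*} [RCLike 𝕜]

theorem PosSemidef.trace_mul_nonneg {P S : Matrix n n 𝕜} (hP : P.PosSemidef)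
    (hS : S.PosSemidef) : 0 ≤ (P * S).trace := by
  classical
  obtain ⟨C, rfl⟩ := CStarAlgebra.nonneg_iff_eq_star_mul_self.mp hS.nonneg
  rw [star_eq_conjTranspose, ← Matrix.mul_assoc, trace_mul_comm, ← Matrix.mul_assoc]
  exact (hP.mul_mul_conjTranspose_same C).trace_nonneg

variable [DecidableEq n]

theorem PosDef.exists_pos_posSemidef_sub_smul_one {P : Matrix n n 𝕜}
    (hP : P.PosDef) : ∃ c > (0 : ℝ), (P - c • (1 : Matrix n n 𝕜)).PosSemidef := by
  rcases isEmpty_or_nonempty n with _ | _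
  · exact ⟨1, one_pos, Subsingleton.elim (0 : Matrix n n 𝕜) (P - (1 : ℝ) • 1) ▸ .zero⟩
  obtain ⟨c, hc, hle⟩ := (CFC.exists_pos_algebraMap_le_iff hP.isStrictlyPositive.isSelfAdjoint).2
    fun x hx ↦ hP.isStrictlyPositive.spectrum_pos hx
  exact ⟨c, hc, by rwa [Algebra.algebraMap_eq_smul_one] at hle⟩

theorem PosSemidef.smul_trace_le_trace_mul {P S : Matrix n n 𝕜} {c : ℝ}
    (hP : (P - c • (1 : Matrix n n 𝕜)).PosSemidef) (hS : S.PosSemidef) :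
    c • S.trace ≤ (P * S).trace := by
  have := hP.trace_mul_nonneg hS
  rwa [Matrix.sub_mul, trace_sub, smul_mul, Matrix.one_mul, trace_smul, sub_nonneg] at this

end Order

theorem pow_mulVec_of_mulVec_eq_smul {R : Type*} [CommSemiring R] [DecidableEq n]
    {M : Matrix n n R} {v : n → R} {c : R} (h : M *ᵥ v = c • v) (k : ℕ) :
    M ^ k *ᵥ v = c ^ k • v := by
  induction k with
  | zero => simp
  | succ k ih => rw [pow_succ', ← mulVec_mulVec, ih, mulVec_smul, h, smul_smul, pow_succ]

theorem norm_le_frobenius_norm_of_mulVec_eq_smul {α : Type*} [RCLike α] {M : Matrix n n α}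
    {v : n → α} {c : α} (hv : v ≠ 0) (h : M *ᵥ v = c • v) : ‖c‖ ≤ ‖M‖ := by
  set V := replicateCol Unit v
  have hV : 0 < ‖V‖ := norm_pos_iff.2 fun h0 ↦ hv <| funext fun i ↦ congrFun (congrFun h0 i) ()
  refine le_of_mul_le_mul_right ?_ hV
  calc ‖c‖ * ‖V‖ = ‖M * V‖ := by rw [← norm_smul, ← replicateCol_smul, ← h, replicateCol_mulVec]
    _ ≤ ‖M‖ * ‖V‖ := frobenius_norm_mul M V

theorem frobenius_norm_sq_eq_trace_transpose_mul_self {m : Type*} [Fintype m]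
    (M : Matrix m n ℝ) : ‖M‖ ^ 2 = (Mᵀ * M).trace := by
  rw [frobenius_norm_def, ← Real.sqrt_eq_rpow, Real.sq_sqrt (by positivity), Finset.sum_comm]
  simp [trace, mul_apply, sq]

end Matrix

theorem trace_pow_lower_bound_of_eigenvalue_general
    {n : Type*} [Fintype n] [DecidableEq n]
    (A Q R : Matrix n n ℝ) (hQ : Q.PosDef) (hR : R.PosDef)
    (μ : ℂ) (hμ : ∃ v : n → ℂ, v ≠ 0 ∧ (A.map Complex.ofReal).mulVec v = μ • v) :
    ∃ κ > (0 : ℝ), ∀ m : ℕ,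
      κ * ‖μ‖ ^ (2 * m) ≤ (Q * (A ^ m * R * (Aᵀ) ^ m)).trace := by
  obtain ⟨v, hv, hAv⟩ := hμ
  obtain ⟨cQ, hcQ, hQc⟩ := hQ.exists_pos_posSemidef_sub_smul_one
  obtain ⟨cR, hcR, hRc⟩ := hR.exists_pos_posSemidef_sub_smul_one
  refine ⟨cQ * cR, by positivity, fun m ↦ ?_⟩
  have hμA : ‖μ‖ ^ m ≤ ‖A ^ m‖ := by
    have h := norm_le_frobenius_norm_of_mulVec_eq_smul hv (pow_mulVec_of_mulVec_eq_smul hAv m)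
    have hmap : (A ^ m).map Complex.ofReal = A.map Complex.ofReal ^ m :=
      map_pow Complex.ofRealHom.mapMatrix A m
    rwa [norm_pow, ← hmap, frobenius_norm_map_eq _ _ Complex.norm_real] at h
  have hS : (A ^ m * R * (Aᵀ) ^ m).PosSemidef := by
    simpa [transpose_pow] using hR.posSemidef.mul_mul_conjTranspose_same (A ^ m)
  calc cQ * cR * ‖μ‖ ^ (2 * m) = cQ * (cR * (‖μ‖ ^ m) ^ 2) := by ring
    _ ≤ cQ * (cR * ((A ^ m)ᵀ * A ^ m).trace) := by
      rw [← frobenius_norm_sq_eq_trace_transpose_mul_self]; gcongr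
    _ ≤ cQ * (R * ((A ^ m)ᵀ * A ^ m)).trace := by
      gcongr; exact hRc.smul_trace_le_trace_mul (posSemidef_conjTranspose_mul_self _)
    _ = cQ * (A ^ m * R * (Aᵀ) ^ m).trace := by
      rw [transpose_pow, trace_mul_cycle, trace_mul_comm]
    _ ≤ (Q * (A ^ m * R * (Aᵀ) ^ m)).trace := hQc.smul_trace_le_trace_mul hS

/-- If `μ` is a complex eigenvalue of `A`, then there exists `κ > 0`
such that `Tr(Q · A^m R (Aᵀ)^m) ≥ κ · |μ|^{2m}` for all `m`. -/
theorem trace_pow_lower_bound_of_eigenvalue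
    {n : Type*} [Fintype n] [Nonempty n] [DecidableEq n]
    (A Q R : Matrix n n ℝ) (hQ : Q.PosDef) (hR : R.PosDef)
    (μ : ℂ) (hμ : ∃ v : n → ℂ, v ≠ 0 ∧ (A.map Complex.ofReal).mulVec v = μ • v) :
    ∃ κ > (0 : ℝ), ∀ m : ℕ,
      κ * ‖μ‖ ^ (2 * m) ≤ (Q * (A ^ m * R * (Aᵀ) ^ m)).trace :=
  trace_pow_lower_bound_of_eigenvalue_general A Q R hQ hR μ hμ
end
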